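/- Let R be a commutative ring and q, m ∈ R. For all natural numbers n and k with k ≤ n, the (q,0)-Whitney numbers of the second kind are rescaled q-Stirling numbers: W_{m,0,q}(n,k) = m^{n-k} * S_q(n,k). -/

import Mathlib

/-!
Both families satisfy the same recurrence once the factor `m` of the weight `m [k+1]_q` is absorbed
into the power `m ^ (n - k)`. That absorption is valid for `k < n`; for `k ≥ n` the q-Stirling
number `S_q(n, k+1)` vanishes, so the truncated exponent never matters.
-/

/-- The q-integer [n]_q. -/
def qInt {R : Type*} [CommRing R] (q : R) (n : ℕ) : R :=
  ∑ i ∈ Finset.range n, q ^ i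

/-- The q-Stirling numbers of the second kind. -/
def qStirling {R : Type*} [CommRing R] (q : R) : ℕ → ℕ → R
  | 0, 0 => 1
  | 0, _ + 1 => 0
  | _ + 1, 0 => 0
  | n + 1, k + 1 => q ^ k * qStirling q n k + qInt q (k + 1) * qStirling q n (k + 1)

/-- The (q,r)-Whitney numbers of the second kind. -/
def qWhitney {R : Type*} [CommRing R] (q m r : R) : ℕ → ℕ → R
  | 0, 0 => 1
  | 0, _ + 1 => 0
  | n + 1, 0 => r * qWhitney q m r n 0
  | n + 1, k + 1 =>
      q ^ k * qWhitney q m r n k + (m * qInt q (k + 1) + r) * qWhitney q m r n (k + 1)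

theorem qStirling_eq_zero_of_lt {R : Type*} [CommRing R] (q : R) {n k : ℕ} (h : n < k) :
    qStirling q n k = 0 := by
  induction n generalizing k with
  | zero =>
    obtain ⟨k, rfl⟩ := Nat.exists_eq_add_of_lt h
    rfl
  | succ n ih =>
    obtain ⟨k, rfl⟩ := Nat.exists_eq_add_of_lt (Nat.zero_lt_of_lt h)
    rw [qStirling, ih (by omega), ih (by omega), mul_zero, mul_zero, add_zero]

theorem pow_sub_mul_qStirling_succ {R : Type*} [CommRing R] (q m : R) (n k : ℕ) :
    m ^ (n - k) * qStirling q n (k + 1) = m * (m ^ (n - (k + 1)) * qStirling q n (k + 1)) := by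
  rcases lt_or_ge k n with h | h
  · rw [show n - k = n - (k + 1) + 1 by omega, pow_succ]
    ring
  · rw [qStirling_eq_zero_of_lt q (Nat.lt_succ_of_le h), mul_zero, mul_zero, mul_zero]

theorem qWhitney_zero_eq_general {R : Type*} [CommRing R] (q m : R) (n k : ℕ) :
    qWhitney q m 0 n k = m ^ (n - k) * qStirling q n k := by
  induction n generalizing k with
  | zero => cases k <;> simp [qWhitney, qStirling]
  | succ n ih =>
    cases k with
    | zero => simp [qWhitney, qStirling]
    | succ k =>
      rw [qWhitney, qStirling, ih, ih, Nat.add_sub_add_right, mul_add,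
        mul_left_comm _ (qInt q _), pow_sub_mul_qStirling_succ]
      ring

/-- (q,0)-Whitney numbers are rescaled q-Stirling numbers. -/
theorem qWhitney_zero_eq {R : Type*} [CommRing R] (q m : R) (n k : ℕ) (hk : k ≤ n) :
    qWhitney q m 0 n k = m ^ (n - k) * qStirling q n k :=
  qWhitney_zero_eq_general q m n k
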